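/- Let k ≥ 3 be an integer, let α be a real number with k−1 < α ≤ k, let a ≥ 0 and t ≥ 0 be real numbers. Then Σ_{ℓ=0}^∞ aˡ t^{αℓ+k−1}/Γ(αℓ + k) ≤ t^{k−α} · Σ_{ℓ=0}^∞ aˡ t^{(ℓ+1)α−1}/Γ((ℓ+1)α). -/

import Mathlib

/-!
Since `Γ` is increasing on `[2, ∞)` and `2 ≤ (ℓ + 1)α ≤ αℓ + k`, each term on the left is at most
the corresponding term on the right once the powers of `t` are combined. The right-hand series
converges because its terms are dominated by those of `t^{α-1} exp(a t^α)`, which makes the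
termwise comparison pass to the sums.
-/

open Real
open scoped Nat

lemma Real.Gamma_le_Gamma_of_two_le {x y : ℝ} (hx : 2 ≤ x) (hxy : x ≤ y) : Gamma x ≤ Gamma y :=
  Gamma_strictMonoOn_Ici.monotoneOn hx (hx.trans hxy) hxy

lemma Real.factorial_le_Gamma_mul_add {α β : ℝ} (hα : 1 ≤ α) (hβ : 2 ≤ β) (n : ℕ) :
    (n ! : ℝ) ≤ Gamma (α * n + β) := by
  have hn : (0 : ℝ) ≤ n := n.cast_nonneg
  calc (n ! : ℝ) ≤ (n + 1)! := by exact_mod_cast Nat.factorial_le n.le_succ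
    _ = Gamma (n + 2) := by rw [← Gamma_nat_eq_factorial]; push_cast; ring_nf
    _ ≤ Gamma (α * n + β) := Gamma_le_Gamma_of_two_le (by linarith) (by nlinarith)

lemma Real.summable_pow_div_Gamma_mul_add {α β : ℝ} (hα : 1 ≤ α) (hβ : 2 ≤ β) (x : ℝ) :
    Summable fun n : ℕ ↦ x ^ n / Gamma (α * n + β) := by
  refine (summable_pow_div_factorial |x|).of_norm_bounded fun n ↦ ?_
  have hfac : (0 : ℝ) < n ! := by exact_mod_cast n.factorial_pos
  have hΓ := factorial_le_Gamma_mul_add hα hβ n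
  rw [norm_div, norm_pow, norm_eq_abs, norm_eq_abs, abs_of_pos (hfac.trans_le hΓ)]
  exact div_le_div_of_nonneg_left (by positivity) hfac hΓ

/-- Scalar form of the first inequality of Lemma 2.2(iii): for `k ≥ 3`,
`k−1 < α ≤ k`, `a ≥ 0` and `t ≥ 0`,
`Σ_ℓ aˡ t^{αℓ+k−1}/Γ(αℓ+k) ≤ t^{k−α} Σ_ℓ aˡ t^{(ℓ+1)α−1}/Γ((ℓ+1)α)`. -/
theorem phi_alpha_km1_le (k : ℕ) (hk : 3 ≤ k) (α : ℝ)
    (hα1 : (k : ℝ) - 1 < α) (hα2 : α ≤ (k : ℝ)) (a t : ℝ) (ha : 0 ≤ a) (ht : 0 ≤ t) :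
    (∑' ℓ : ℕ, a ^ ℓ * t ^ (α * ℓ + k - 1) / Real.Gamma (α * ℓ + k)) ≤
      t ^ ((k : ℝ) - α) *
        ∑' ℓ : ℕ, a ^ ℓ * t ^ ((ℓ + 1) * α - 1) / Real.Gamma ((ℓ + 1) * α) := by
  have hα : 2 ≤ α := by
    have : (3 : ℝ) ≤ k := by exact_mod_cast hk
    linarith
  have hsum : Summable fun ℓ : ℕ ↦ a ^ ℓ * t ^ ((ℓ + 1) * α - 1) / Gamma ((ℓ + 1) * α) := by
    refine ((summable_pow_div_Gamma_mul_add (one_le_two.trans hα) hα (a * t ^ α)).mul_left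
      (t ^ (α - 1))).congr fun ℓ ↦ ?_
    have hℓ : (0 : ℝ) ≤ ℓ := ℓ.cast_nonneg
    rw [show ((ℓ : ℝ) + 1) * α - 1 = α - 1 + α * ℓ by ring, rpow_add' ht (by nlinarith),
      rpow_mul_natCast ht, show ((ℓ : ℝ) + 1) * α = α * ℓ + α by ring]
    ring
  have hterm : ∀ ℓ : ℕ, a ^ ℓ * t ^ (α * ℓ + k - 1) / Gamma (α * ℓ + k) ≤
      t ^ ((k : ℝ) - α) * (a ^ ℓ * t ^ ((ℓ + 1) * α - 1) / Gamma ((ℓ + 1) * α)) := fun ℓ ↦ by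
    have hℓ : (0 : ℝ) ≤ ℓ := ℓ.cast_nonneg
    -- `rpow_add'` only needs a nonzero total exponent, so `t = 0` needs no separate case.
    have hpow : t ^ ((k : ℝ) - α) * t ^ ((ℓ + 1) * α - 1) = t ^ (α * ℓ + k - 1) := by
      rw [← rpow_add' ht (by nlinarith)]; ring_nf
    rw [← mul_div_assoc, mul_left_comm, hpow]
    exact div_le_div_of_nonneg_left (by positivity) (Gamma_pos_of_pos (by nlinarith))
      (Gamma_le_Gamma_of_two_le (by nlinarith) (by nlinarith))
  have hsum' := hsum.mul_left (t ^ ((k : ℝ) - α))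
  have hnonneg : ∀ ℓ : ℕ, 0 ≤ a ^ ℓ * t ^ (α * ℓ + k - 1) / Gamma (α * ℓ + k) := fun ℓ ↦
    div_nonneg (by positivity) (Gamma_nonneg_of_nonneg (by positivity))
  rw [← tsum_mul_left]
  exact (hsum'.of_nonneg_of_le hnonneg hterm).tsum_le_tsum hterm hsum'
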